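/- Backward-invariant sequences with prescribed asymptotics at minus infinity: let H be a complex Hilbert space, A a bounded operator on H with ‖A‖ ≤ 1, and let Δ be the strong limit of A^n A^{*n}. Fix c ∈ H and m ∈ ℤ and define h : ℤ → H by h(t) := Δ A^{*(m−t)} c for t ≤ m and h(t) := A^{t−m} Δ c for t > m. Then: (i) h(t+1) = A h(t) for every t ∈ ℤ; (ii) ‖h(t)‖² ≤ ‖Δ‖ · ⟨Δ c, c⟩ for all t, and the limit of ‖h(t)‖² as t → −∞ exists and is finite; (iii) for every g : ℤ → H with g(t+1) = A g(t) for all t ∈ ℤ and sup_t ‖g(t)‖ < ∞, one has ⟨(I − Δ) A^{*(m−t)} c, g(t)⟩ → 0 as t → −∞, i.e. h is asymptotic at −∞ to the sequence t ↦ A^{*(m−t)} c; (iv) h is the unique such sequence: if h' : ℤ → H satisfies h'(t+1) = A h'(t) for all t, sup_t ‖h'(t)‖ < ∞, and ⟨A^{*(m−t)} c − h'(t), g(t)⟩ → 0 as t → −∞ for every g as in (iii), then h' = h. -/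

import Mathlib

/-!
The limit `Δ` is a positive operator with `A Δ A* = Δ` and `re ⟪Δ x, x⟫ = lim ‖A*ⁿ x‖²`;
hence `Δ ≤ 1` and the form `⟪Δ ·, ·⟫` is invariant under `A*`. The identity `A Δ A* = Δ`
makes `h` backward invariant, and along a backward invariant sequence of a contraction the
norm is nonincreasing in `t`, which gives the bound and the limit at `-∞`. Cauchy–Schwarz for
the positive form `⟪(1 - Δ) ·, ·⟫` bounds `‖⟪(1 - Δ) A*ⁿ c, g t⟫‖²` by a multiple of
`⟪(1 - Δ) A*ⁿ c, A*ⁿ c⟫ = ‖A*ⁿ c‖² - ⟪Δ c, c⟫ → 0`. For uniqueness, `d = h' - h` is bounded and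
backward invariant, and subtracting the two asymptotic relations tested against `g = d` gives
`‖d t‖² → 0` at `-∞`; as `‖d t‖` is nonincreasing, `d = 0`.
-/

open ContinuousLinearMap Filter

open scoped InnerProductSpace Topology

section Contraction

variable {𝕜 E : Type*} [RCLike 𝕜] [NormedAddCommGroup E] [NormedSpace 𝕜 E]
  {T : E →L[𝕜] E}

theorem norm_pow_apply_le_of_norm_le_one (hT : ‖T‖ ≤ 1) (n : ℕ) (x : E) :
    ‖(T ^ n) x‖ ≤ ‖x‖ := by
  induction n with
  | zero => simp
  | succ n ih =>
    rw [pow_succ', mul_apply_eq_comp]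
    exact (T.le_of_opNorm_le hT _).trans (by simpa using ih)

theorem antitone_norm_of_apply_succ (hT : ‖T‖ ≤ 1) {g : ℤ → E}
    (hg : ∀ t, g (t + 1) = T (g t)) : Antitone fun t => ‖g t‖ :=
  antitone_int_of_succ_le fun t => by
    simpa [hg t] using T.le_of_opNorm_le hT (g t)

theorem eq_zero_of_apply_succ_of_tendsto_norm_atBot (hT : ‖T‖ ≤ 1) {g : ℤ → E}
    (hg : ∀ t, g (t + 1) = T (g t)) (h0 : Tendsto (fun t => ‖g t‖) atBot (𝓝 0)) :
    g = 0 :=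
  funext fun t => norm_le_zero_iff.mp ((antitone_norm_of_apply_succ hT hg).ge_of_tendsto h0 t)

end Contraction

theorem ContinuousLinearMap.re_inner_apply_self_le {𝕜 E : Type*} [RCLike 𝕜]
    [NormedAddCommGroup E] [InnerProductSpace 𝕜 E] (T : E →L[𝕜] E) (x : E) :
    RCLike.re ⟪T x, x⟫_𝕜 ≤ ‖T‖ * ‖x‖ ^ 2 :=
  calc RCLike.re ⟪T x, x⟫_𝕜 ≤ ‖T x‖ * ‖x‖ :=
        (RCLike.re_le_norm _).trans (norm_inner_le_norm _ _)
    _ ≤ ‖T‖ * ‖x‖ * ‖x‖ := by gcongr; exact T.le_opNorm x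
    _ = ‖T‖ * ‖x‖ ^ 2 := by ring

namespace ContinuousLinearMap.IsPositive

variable {𝕜 E : Type*} [RCLike 𝕜] [NormedAddCommGroup E] [InnerProductSpace 𝕜 E]
  {T : E →L[𝕜] E}

theorem norm_inner_sq_le (hT : T.IsPositive) (u v : E) :
    ‖⟪T u, v⟫_𝕜‖ ^ 2 ≤ RCLike.re ⟪T u, u⟫_𝕜 * RCLike.re ⟪T v, v⟫_𝕜 := by
  let core : PreInnerProductSpace.Core 𝕜 E :=
    { inner := fun x y => ⟪T x, y⟫_𝕜
      conj_inner_symm := fun x y => by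
        rw [← inner_conj_symm, hT.inner_left_eq_inner_right, RCLike.conj_conj]
      re_inner_nonneg := hT.re_inner_nonneg_left
      add_left := fun x y z => by simp [inner_add_left]
      smul_left := fun x y r => by simp [inner_smul_left] }
  have hcs : ‖⟪T u, v⟫_𝕜‖ * ‖⟪T v, u⟫_𝕜‖ ≤ RCLike.re ⟪T u, u⟫_𝕜 * RCLike.re ⟪T v, v⟫_𝕜 :=
    InnerProductSpace.Core.inner_mul_inner_self_le (c := core) u v
  have hswap : ‖⟪T v, u⟫_𝕜‖ = ‖⟪T u, v⟫_𝕜‖ := by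
    rw [← inner_conj_symm, hT.inner_left_eq_inner_right, RCLike.norm_conj]
  rwa [hswap, ← sq] at hcs

theorem norm_apply_sq_le (hT : T.IsPositive) (x : E) :
    ‖T x‖ ^ 2 ≤ ‖T‖ * RCLike.re ⟪T x, x⟫_𝕜 := by
  have hcs := hT.norm_inner_sq_le x (T x)
  rw [inner_self_eq_norm_sq_to_K, norm_pow, RCLike.norm_ofReal, abs_norm] at hcs
  have hTT := T.re_inner_apply_self_le (T x)
  have hpos := hT.re_inner_nonneg_left x
  rcases (norm_nonneg (T x)).eq_or_lt with h0 | h0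
  · rw [← h0, sq, zero_mul]; exact mul_nonneg (norm_nonneg T) hpos
  · nlinarith [pow_pos h0 2, mul_le_mul_of_nonneg_left hTT hpos]

theorem tendsto_inner_zero (hT : T.IsPositive) {ι : Type*} {l : Filter ι} {u v : ι → E}
    (hu : Tendsto (fun i => RCLike.re ⟪T (u i), u i⟫_𝕜) l (𝓝 0)) {C : ℝ}
    (hv : ∀ i, ‖v i‖ ≤ C) : Tendsto (fun i => ⟪T (u i), v i⟫_𝕜) l (𝓝 0) := by
  have hsq : Tendsto (fun i => ‖⟪T (u i), v i⟫_𝕜‖ ^ 2) l (𝓝 0) := by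
    refine squeeze_zero (fun _ => sq_nonneg _) (fun i => ?_)
      (by simpa using hu.mul_const (‖T‖ * C ^ 2))
    calc ‖⟪T (u i), v i⟫_𝕜‖ ^ 2
        ≤ RCLike.re ⟪T (u i), u i⟫_𝕜 * RCLike.re ⟪T (v i), v i⟫_𝕜 := hT.norm_inner_sq_le _ _
      _ ≤ RCLike.re ⟪T (u i), u i⟫_𝕜 * (‖T‖ * C ^ 2) := by
        gcongr
        · exact hT.re_inner_nonneg_left _
        · exact (T.re_inner_apply_self_le _).trans (by gcongr; exact hv i)
  rw [tendsto_zero_iff_norm_tendsto_zero]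
  simpa [Real.sqrt_sq (norm_nonneg _)] using hsq.sqrt

end ContinuousLinearMap.IsPositive

section AsymptoticLimit

variable {𝕜 E : Type*} [RCLike 𝕜] [NormedAddCommGroup E] [InnerProductSpace 𝕜 E]
  [CompleteSpace E]

theorem ContinuousLinearMap.adjoint_pow (A : E →L[𝕜] E) (n : ℕ) :
    adjoint (A ^ n) = adjoint A ^ n := by
  rw [← star_eq_adjoint, ← star_eq_adjoint, star_pow]

theorem ContinuousLinearMap.inner_pow_mul_adjoint_pow_apply (A : E →L[𝕜] E) (n : ℕ) (x y : E) :
    ⟪(A ^ n * adjoint A ^ n) x, y⟫_𝕜 = ⟪(adjoint A ^ n) x, (adjoint A ^ n) y⟫_𝕜 := by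
  rw [mul_apply_eq_comp, ← adjoint_inner_right, adjoint_pow]

def IsAsymptoticLimit (A Δ : E →L[𝕜] E) : Prop :=
  ∀ x, Tendsto (fun n : ℕ => (A ^ n * adjoint A ^ n) x) atTop (𝓝 (Δ x))

namespace IsAsymptoticLimit

variable {A Δ : E →L[𝕜] E} (hΔ : IsAsymptoticLimit A Δ)
include hΔ

theorem apply_apply_adjoint (x : E) : A (Δ (adjoint A x)) = Δ x := by
  have hshift : Tendsto (fun n : ℕ => A ((A ^ n * adjoint A ^ n) (adjoint A x))) atTop
      (𝓝 (Δ x)) := by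
    refine ((hΔ x).comp (tendsto_add_atTop_nat 1)).congr fun n => ?_
    simp only [Function.comp_apply, mul_apply_eq_comp, pow_succ' A, pow_succ (adjoint A)]
  exact tendsto_nhds_unique ((A.continuous.tendsto _).comp (hΔ (adjoint A x))) hshift

theorem pow_apply_apply_adjoint_pow (n : ℕ) (x : E) :
    (A ^ n) (Δ ((adjoint A ^ n) x)) = Δ x := by
  induction n generalizing x with
  | zero => simp
  | succ n ih =>
    rw [pow_succ A, pow_succ' (adjoint A), mul_apply_eq_comp, mul_apply_eq_comp,
      hΔ.apply_apply_adjoint, ih]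

theorem tendsto_inner_adjoint_pow (x y : E) :
    Tendsto (fun n : ℕ => ⟪(adjoint A ^ n) x, (adjoint A ^ n) y⟫_𝕜) atTop (𝓝 ⟪Δ x, y⟫_𝕜) := by
  simpa only [inner_pow_mul_adjoint_pow_apply] using
    (hΔ x).inner (𝕜 := 𝕜) (tendsto_const_nhds (x := y))

theorem tendsto_norm_adjoint_pow_sq (x : E) :
    Tendsto (fun n : ℕ => ‖(adjoint A ^ n) x‖ ^ 2) atTop (𝓝 (RCLike.re ⟪Δ x, x⟫_𝕜)) := by
  simpa only [inner_self_eq_norm_sq (𝕜 := 𝕜), Function.comp_def] using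
    (RCLike.continuous_re.tendsto _).comp (hΔ.tendsto_inner_adjoint_pow x x)

theorem isPositive : Δ.IsPositive := by
  refine ⟨fun x y => ?_, fun x => ?_⟩
  · have hsymm := (RCLike.continuous_conj.tendsto _).comp (hΔ.tendsto_inner_adjoint_pow y x)
    simp only [Function.comp_def, inner_conj_symm] at hsymm
    exact tendsto_nhds_unique (hΔ.tendsto_inner_adjoint_pow x y) hsymm
  · exact ge_of_tendsto' (hΔ.tendsto_norm_adjoint_pow_sq x) fun n => sq_nonneg _

theorem le_one (hA : ‖A‖ ≤ 1) : Δ ≤ 1 := by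
  have hA' : ‖adjoint A‖ ≤ 1 := (LinearIsometryEquiv.norm_map adjoint A).trans_le hA
  refine ⟨fun x y => ?_, fun x => ?_⟩
  · simp [inner_sub_left, inner_sub_right, hΔ.isPositive.inner_left_eq_inner_right]
  · rw [reApplyInnerSelf_apply, sub_apply, one_apply_eq_self, inner_sub_left, map_sub,
      inner_self_eq_norm_sq, sub_nonneg]
    exact le_of_tendsto' (hΔ.tendsto_norm_adjoint_pow_sq x) fun n =>
      pow_le_pow_left₀ (norm_nonneg _) (norm_pow_apply_le_of_norm_le_one hA' n x) 2

theorem inner_apply_adjoint_pow (n : ℕ) (x : E) :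
    ⟪Δ ((adjoint A ^ n) x), (adjoint A ^ n) x⟫_𝕜 = ⟪Δ x, x⟫_𝕜 := by
  rw [← adjoint_pow, adjoint_inner_right, adjoint_pow, hΔ.pow_apply_apply_adjoint_pow]

theorem norm_apply_adjoint_pow_sq_le (n : ℕ) (x : E) :
    ‖Δ ((adjoint A ^ n) x)‖ ^ 2 ≤ ‖Δ‖ * RCLike.re ⟪Δ x, x⟫_𝕜 := by
  simpa only [hΔ.inner_apply_adjoint_pow] using
    hΔ.isPositive.norm_apply_sq_le ((adjoint A ^ n) x)

theorem tendsto_re_inner_one_sub_adjoint_pow (x : E) :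
    Tendsto (fun n : ℕ => RCLike.re ⟪(1 - Δ) ((adjoint A ^ n) x), (adjoint A ^ n) x⟫_𝕜)
      atTop (𝓝 0) := by
  have hlim := (hΔ.tendsto_norm_adjoint_pow_sq x).sub_const (RCLike.re ⟪Δ x, x⟫_𝕜)
  rw [sub_self] at hlim
  refine hlim.congr fun n => ?_
  rw [sub_apply, one_apply_eq_self, inner_sub_left, map_sub, inner_self_eq_norm_sq,
    hΔ.inner_apply_adjoint_pow]

end IsAsymptoticLimit

noncomputable def backwardOrbit (A Δ : E →L[𝕜] E) (c : E) (m t : ℤ) : E :=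
  if t ≤ m then Δ ((adjoint A ^ (m - t).toNat) c) else (A ^ (t - m).toNat) (Δ c)

theorem backwardOrbit_of_le {A Δ : E →L[𝕜] E} {c : E} {m t : ℤ} (ht : t ≤ m) :
    backwardOrbit A Δ c m t = Δ ((adjoint A ^ (m - t).toNat) c) :=
  if_pos ht

theorem tendsto_toNat_sub_atBot (m : ℤ) : Tendsto (fun t : ℤ => (m - t).toNat) atBot atTop :=
  tendsto_atTop.2 fun n => eventually_atBot.2 ⟨m - n, fun t ht => by omega⟩

namespace IsAsymptoticLimit

variable {A Δ : E →L[𝕜] E} (hΔ : IsAsymptoticLimit A Δ) (c : E) (m : ℤ)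
include hΔ

theorem backwardOrbit_succ (t : ℤ) :
    backwardOrbit A Δ c m (t + 1) = A (backwardOrbit A Δ c m t) := by
  unfold backwardOrbit
  rcases lt_trichotomy t m with hlt | rfl | hgt
  · rw [if_pos (by omega : t + 1 ≤ m), if_pos hlt.le,
      show (m - t).toNat = (m - (t + 1)).toNat + 1 by omega, pow_succ', mul_apply_eq_comp,
      hΔ.apply_apply_adjoint]
  · simp
  · rw [if_neg (by omega), if_neg (by omega),
      show (t + 1 - m).toNat = (t - m).toNat + 1 by omega, pow_succ', mul_apply_eq_comp]

theorem norm_backwardOrbit_sq_le (hA : ‖A‖ ≤ 1) (t : ℤ) :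
    ‖backwardOrbit A Δ c m t‖ ^ 2 ≤ ‖Δ‖ * RCLike.re ⟪Δ c, c⟫_𝕜 := by
  have hle : ‖backwardOrbit A Δ c m t‖ ≤ ‖backwardOrbit A Δ c m (min t m)‖ :=
    antitone_norm_of_apply_succ hA (hΔ.backwardOrbit_succ c m) (min_le_left t m)
  rw [backwardOrbit_of_le (min_le_right t m)] at hle
  exact (pow_le_pow_left₀ (norm_nonneg _) hle 2).trans (hΔ.norm_apply_adjoint_pow_sq_le _ c)

theorem exists_tendsto_norm_backwardOrbit_sq_atBot (hA : ‖A‖ ≤ 1) :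
    ∃ r, Tendsto (fun t => ‖backwardOrbit A Δ c m t‖ ^ 2) atBot (𝓝 r) :=
  ⟨_, tendsto_atBot_ciSup
    (fun _ _ hst => pow_le_pow_left₀ (norm_nonneg _)
      (antitone_norm_of_apply_succ hA (hΔ.backwardOrbit_succ c m) hst) 2)
    ⟨_, Set.forall_mem_range.2 (hΔ.norm_backwardOrbit_sq_le c m hA)⟩⟩

theorem tendsto_inner_one_sub_adjoint_pow_atBot (hA : ‖A‖ ≤ 1) {g : ℤ → E} {C : ℝ}
    (hg : ∀ t, ‖g t‖ ≤ C) :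
    Tendsto (fun t : ℤ => ⟪(1 - Δ) ((adjoint A ^ (m - t).toNat) c), g t⟫_𝕜) atBot (𝓝 0) :=
  ((le_def _ _).1 (hΔ.le_one hA)).tendsto_inner_zero
    ((hΔ.tendsto_re_inner_one_sub_adjoint_pow c).comp (tendsto_toNat_sub_atBot m)) hg

theorem eq_backwardOrbit (hA : ‖A‖ ≤ 1) {h : ℤ → E} (hh : ∀ t, h (t + 1) = A (h t))
    {C : ℝ} (hC : ∀ t, ‖h t‖ ≤ C)
    (hasymp : ∀ g : ℤ → E, (∀ t, g (t + 1) = A (g t)) → (∃ Cb : ℝ, ∀ t, ‖g t‖ ≤ Cb) →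
      Tendsto (fun t : ℤ => ⟪(adjoint A ^ (m - t).toNat) c - h t, g t⟫_𝕜) atBot (𝓝 0)) :
    h = backwardOrbit A Δ c m := by
  set d := h - backwardOrbit A Δ c m
  have hd_succ (t : ℤ) : d (t + 1) = A (d t) := by
    simp only [d, Pi.sub_apply, hh, hΔ.backwardOrbit_succ, map_sub]
  have hd_bdd (t : ℤ) : ‖d t‖ ≤ C + √(‖Δ‖ * RCLike.re ⟪Δ c, c⟫_𝕜) :=
    (norm_sub_le _ _).trans <| add_le_add (hC t) <|
      Real.le_sqrt_of_sq_le (hΔ.norm_backwardOrbit_sq_le c m hA t)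
  have hself : Tendsto (fun t => ⟪d t, d t⟫_𝕜) atBot (𝓝 0) := by
    have hdiff := (hΔ.tendsto_inner_one_sub_adjoint_pow_atBot c m hA hd_bdd).sub
      (hasymp d hd_succ ⟨_, hd_bdd⟩)
    rw [sub_zero] at hdiff
    refine hdiff.congr' ?_
    filter_upwards [eventually_le_atBot m] with t ht
    rw [← inner_sub_left, sub_apply, one_apply_eq_self, ← backwardOrbit_of_le ht]
    congr 1
    simp only [d, Pi.sub_apply]
    abel
  have hnorm : Tendsto (fun t => ‖d t‖) atBot (𝓝 0) := by
    simpa [Real.sqrt_sq] using (tendsto_zero_iff_norm_tendsto_zero.1 hself).sqrt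
  exact sub_eq_zero.1 (eq_zero_of_apply_succ_of_tendsto_norm_atBot hA hd_succ hnorm)

end IsAsymptoticLimit

end AsymptoticLimit

theorem backward_invariant_sequence_asymptotics
    {H : Type*} [NormedAddCommGroup H] [InnerProductSpace ℂ H] [CompleteSpace H]
    (A : H →L[ℂ] H) (hA : ‖A‖ ≤ 1) (Δ : H →L[ℂ] H)
    (hΔ : ∀ x : H,
      Tendsto (fun n : ℕ => ‖(A ^ n * adjoint A ^ n) x - Δ x‖) atTop (nhds 0))
    (c : H) (m : ℤ) (h : ℤ → H)
    (hh : ∀ t : ℤ, h t =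
      if t ≤ m then Δ ((adjoint A ^ (m - t).toNat) c) else (A ^ (t - m).toNat) (Δ c)) :
    (∀ t : ℤ, h (t + 1) = A (h t)) ∧
    ((∀ t : ℤ, ‖h t‖ ^ 2 ≤ ‖Δ‖ * (inner ℂ (Δ c) c : ℂ).re) ∧
      ∃ r : ℝ, Tendsto (fun t : ℤ => ‖h t‖ ^ 2) atBot (nhds r)) ∧
    (∀ g : ℤ → H, (∀ t, g (t + 1) = A (g t)) → (∃ Cb : ℝ, ∀ t, ‖g t‖ ≤ Cb) →
      Tendsto
        (fun t : ℤ =>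
          (inner ℂ (((1 : H →L[ℂ] H) - Δ) ((adjoint A ^ (m - t).toNat) c)) (g t) : ℂ))
        atBot (nhds 0)) ∧
    ∀ h' : ℤ → H, (∀ t, h' (t + 1) = A (h' t)) → (∃ Cb : ℝ, ∀ t, ‖h' t‖ ≤ Cb) →
      (∀ g : ℤ → H, (∀ t, g (t + 1) = A (g t)) → (∃ Cb : ℝ, ∀ t, ‖g t‖ ≤ Cb) →
        Tendsto
          (fun t : ℤ => (inner ℂ ((adjoint A ^ (m - t).toNat) c - h' t) (g t) : ℂ))
          atBot (nhds 0)) →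
      h' = h := by
  have hΔ' : IsAsymptoticLimit A Δ := fun x => tendsto_iff_norm_sub_tendsto_zero.2 (hΔ x)
  obtain rfl : h = backwardOrbit A Δ c m := funext hh
  exact ⟨hΔ'.backwardOrbit_succ c m,
    ⟨hΔ'.norm_backwardOrbit_sq_le c m hA, hΔ'.exists_tendsto_norm_backwardOrbit_sq_atBot c m hA⟩,
    fun _ _ ⟨_, hg⟩ => hΔ'.tendsto_inner_one_sub_adjoint_pow_atBot c m hA hg,
    fun _ hh' ⟨_, hC⟩ hasymp => hΔ'.eq_backwardOrbit c m hA hh' hC hasymp⟩
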